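/- Let P : ℝ³ → ℝ³ be a smooth map and define, for smooth functions f, g : ℝ³ → ℝ, the bracket {f,g}(p) = ⟨P(p), ∇f(p) × ∇g(p)⟩. Then the Jacobi identity {f,{g,h}} + {g,{h,f}} + {h,{f,g}} = 0 holds for all smooth f, g, h : ℝ³ → ℝ if and only if ⟨P(p), curl P(p)⟩ = 0 for every p ∈ ℝ³. -/

import Mathlib

noncomputable section

open Matrix

/-- Points of ℝ³. -/
abbrev V3 : Type := Fin 3 → ℝ

/-- Partial derivative in the `i`-th coordinate direction. -/
def pd (i : Fin 3) (f : V3 → ℝ) (p : V3) : ℝ := fderiv ℝ f p (Pi.single i 1)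

/-- curl of a vector field on ℝ³. -/
def curl3 (P : V3 → V3) (p : V3) : V3 :=
  ![pd 1 (fun q => P q 2) p - pd 2 (fun q => P q 1) p,
    pd 2 (fun q => P q 0) p - pd 0 (fun q => P q 2) p,
    pd 0 (fun q => P q 1) p - pd 1 (fun q => P q 0) p]

/-- gradient of a function on ℝ³. -/
def grad (f : V3 → ℝ) (p : V3) : V3 := fun i => fderiv ℝ f p (Pi.single i 1)

/-- The bracket `{f,g}(p) = ⟨P(p), ∇f(p) × ∇g(p)⟩` associated to the bivector field
encoded by `P`. -/
def pb (P : V3 → V3) (f g : V3 → ℝ) (p : V3) : ℝ :=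
  P p ⬝ᵥ crossProduct (grad f p) (grad g p)

/-! ### Auxiliary lemmas -/

lemma grad_apply (f : V3 → ℝ) (p : V3) (i : Fin 3) : grad f p i = pd i f p := rfl

lemma contDiff_pd {f : V3 → ℝ} (hf : ContDiff ℝ (⊤ : ℕ∞) f) (i : Fin 3) : ContDiff ℝ (⊤ : ℕ∞) (pd i f) :=
  (hf.fderiv_right (by simp)).clm_apply contDiff_const

lemma diff_pd {f : V3 → ℝ} (hf : ContDiff ℝ (⊤ : ℕ∞) f) (i : Fin 3) : Differentiable ℝ (pd i f) :=
  (contDiff_pd hf i).differentiable (by simp)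

lemma contDiff_comp' {P : V3 → V3} (hP : ContDiff ℝ (⊤ : ℕ∞) P) (k : Fin 3) :
    ContDiff ℝ (⊤ : ℕ∞) (fun q => P q k) :=
  (ContinuousLinearMap.proj (R := ℝ) (φ := fun _ : Fin 3 => ℝ) k).contDiff.comp hP

lemma pd_comm {f : V3 → ℝ} (hf : ContDiff ℝ (⊤ : ℕ∞) f) (i j : Fin 3) (p : V3) :
    pd i (pd j f) p = pd j (pd i f) p := by
  have hsymm : IsSymmSndFDerivAt ℝ f p := hf.contDiffAt.isSymmSndFDerivAt (by norm_num; exact WithTop.coe_le_coe.mpr le_top)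
  have hd : DifferentiableAt ℝ (fderiv ℝ f) p :=
    ((hf.fderiv_right (m := (⊤ : ℕ∞)) (by simp)).differentiable (by simp)) p
  have key : ∀ a b : Fin 3, pd a (pd b f) p =
      fderiv ℝ (fderiv ℝ f) p (Pi.single a 1) (Pi.single b 1) := by
    intro a b
    show fderiv ℝ (fun q => (fderiv ℝ f q) (Pi.single b 1)) p (Pi.single a 1) = _
    rw [fderiv_clm_apply hd (differentiableAt_const _)]
    simp
  rw [key, key, hsymm.eq]

lemma pb_expand (P : V3 → V3) (u v : V3 → ℝ) (q : V3) :
    pb P u v q =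
      P q 0 * (pd 1 u q * pd 2 v q - pd 2 u q * pd 1 v q) +
      P q 1 * (pd 2 u q * pd 0 v q - pd 0 u q * pd 2 v q) +
      P q 2 * (pd 0 u q * pd 1 v q - pd 1 u q * pd 0 v q) := by
  simp [pb, grad, pd, crossProduct, dotProduct, Fin.sum_univ_three]

lemma pd_add {A B : V3 → ℝ} {p : V3} (i : Fin 3) (hA : DifferentiableAt ℝ A p)
    (hB : DifferentiableAt ℝ B p) :
    pd i (fun q => A q + B q) p = pd i A p + pd i B p := by
  simp [pd, fderiv_fun_add hA hB]

lemma pd_term {a b c d e : V3 → ℝ} {p : V3} (i : Fin 3)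
    (ha : DifferentiableAt ℝ a p) (hb : DifferentiableAt ℝ b p)
    (hc : DifferentiableAt ℝ c p) (hd : DifferentiableAt ℝ d p)
    (he : DifferentiableAt ℝ e p) :
    pd i (fun q => a q * (b q * c q - d q * e q)) p =
      pd i a p * (b p * c p - d p * e p) +
      a p * ((pd i b p * c p + b p * pd i c p) - (pd i d p * e p + d p * pd i e p)) := by
  have h1 : DifferentiableAt ℝ (fun q => b q * c q - d q * e q) p :=
    (hb.mul hc).sub (hd.mul he)
  simp only [pd, fderiv_fun_mul ha h1, fderiv_fun_sub (hb.fun_mul hc) (hd.fun_mul he),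
    fderiv_fun_mul hb hc, fderiv_fun_mul hd he]
  simp
  ring

lemma pd_pb {P : V3 → V3} {u v : V3 → ℝ} (hP : ContDiff ℝ (⊤ : ℕ∞) P)
    (hu : ContDiff ℝ (⊤ : ℕ∞) u) (hv : ContDiff ℝ (⊤ : ℕ∞) v) (i : Fin 3) (p : V3) :
    pd i (pb P u v) p =
      (pd i (fun q => P q 0) p * (pd 1 u p * pd 2 v p - pd 2 u p * pd 1 v p) +
        P p 0 * ((pd i (pd 1 u) p * pd 2 v p + pd 1 u p * pd i (pd 2 v) p) -
          (pd i (pd 2 u) p * pd 1 v p + pd 2 u p * pd i (pd 1 v) p))) +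
      (pd i (fun q => P q 1) p * (pd 2 u p * pd 0 v p - pd 0 u p * pd 2 v p) +
        P p 1 * ((pd i (pd 2 u) p * pd 0 v p + pd 2 u p * pd i (pd 0 v) p) -
          (pd i (pd 0 u) p * pd 2 v p + pd 0 u p * pd i (pd 2 v) p))) +
      (pd i (fun q => P q 2) p * (pd 0 u p * pd 1 v p - pd 1 u p * pd 0 v p) +
        P p 2 * ((pd i (pd 0 u) p * pd 1 v p + pd 0 u p * pd i (pd 1 v) p) -
          (pd i (pd 1 u) p * pd 0 v p + pd 1 u p * pd i (pd 0 v) p))) := by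
  have hPk : ∀ k : Fin 3, DifferentiableAt ℝ (fun q => P q k) p := fun k =>
    ((contDiff_comp' hP k).differentiable (by simp)) p
  have hdu : ∀ j : Fin 3, DifferentiableAt ℝ (pd j u) p := fun j => (diff_pd hu j) p
  have hdv : ∀ j : Fin 3, DifferentiableAt ℝ (pd j v) p := fun j => (diff_pd hv j) p
  have hT : ∀ (k a b c d : Fin 3), DifferentiableAt ℝ
      (fun q => P q k * (pd a u q * pd b v q - pd c u q * pd d v q)) p := fun k a b c d =>
    (hPk k).mul (((hdu a).mul (hdv b)).sub ((hdu c).mul (hdv d)))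
  have e : pb P u v = fun q =>
      (P q 0 * (pd 1 u q * pd 2 v q - pd 2 u q * pd 1 v q) +
       P q 1 * (pd 2 u q * pd 0 v q - pd 0 u q * pd 2 v q)) +
      P q 2 * (pd 0 u q * pd 1 v q - pd 1 u q * pd 0 v q) :=
    funext fun q => pb_expand P u v q
  rw [e, pd_add i ((hT 0 1 2 2 1).fun_add (hT 1 2 0 0 2)) (hT 2 0 1 1 0),
    pd_add i (hT 0 1 2 2 1) (hT 1 2 0 0 2),
    pd_term i (hPk 0) (hdu 1) (hdv 2) (hdu 2) (hdv 1),
    pd_term i (hPk 1) (hdu 2) (hdv 0) (hdu 0) (hdv 2),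
    pd_term i (hPk 2) (hdu 0) (hdv 1) (hdu 1) (hdv 0)]

lemma jacobiator {P : V3 → V3} (hP : ContDiff ℝ (⊤ : ℕ∞) P) {f g h : V3 → ℝ}
    (hf : ContDiff ℝ (⊤ : ℕ∞) f) (hg : ContDiff ℝ (⊤ : ℕ∞) g) (hh : ContDiff ℝ (⊤ : ℕ∞) h) (p : V3) :
    pb P f (pb P g h) p + pb P g (pb P h f) p + pb P h (pb P f g) p =
      -(P p ⬝ᵥ curl3 P p) * (grad f p ⬝ᵥ crossProduct (grad g p) (grad h p)) := by
  rw [pb_expand P f (pb P g h) p, pb_expand P g (pb P h f) p, pb_expand P h (pb P f g) p]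
  simp only [pd_pb hP hg hh, pd_pb hP hh hf, pd_pb hP hf hg]
  rw [pd_comm hf 2 1 p, pd_comm hf 2 0 p, pd_comm hf 1 0 p,
      pd_comm hg 2 1 p, pd_comm hg 2 0 p, pd_comm hg 1 0 p,
      pd_comm hh 2 1 p, pd_comm hh 2 0 p, pd_comm hh 1 0 p]
  simp only [curl3, dotProduct, crossProduct, grad_apply, Fin.sum_univ_three,
    Matrix.cons_val_zero, Matrix.cons_val_one, Matrix.head_cons, Matrix.cons_val_two,
    Matrix.tail_cons, LinearMap.mk₂_apply]
  ring

theorem stmt6 (P : V3 → V3) (hP : ContDiff ℝ (⊤ : ℕ∞) P) :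
    (∀ f g h : V3 → ℝ, ContDiff ℝ (⊤ : ℕ∞) f → ContDiff ℝ (⊤ : ℕ∞) g → ContDiff ℝ (⊤ : ℕ∞) h → ∀ p,
      pb P f (pb P g h) p + pb P g (pb P h f) p + pb P h (pb P f g) p = 0)
    ↔ (∀ p, P p ⬝ᵥ curl3 P p = 0) := by
  constructor
  · intro hJ p
    have hcoord : ∀ k : Fin 3, ContDiff ℝ (⊤ : ℕ∞) (fun q : V3 => q k) := fun k =>
      (ContinuousLinearMap.proj (R := ℝ) (φ := fun _ : Fin 3 => ℝ) k).contDiff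
    have h0 := hJ (fun q => q 0) (fun q => q 1) (fun q => q 2)
      (hcoord 0) (hcoord 1) (hcoord 2) p
    rw [jacobiator hP (hcoord 0) (hcoord 1) (hcoord 2) p] at h0
    have hgc : ∀ k : Fin 3, grad (fun q : V3 => q k) p = Pi.single k 1 := by
      intro k
      funext i
      have : fderiv ℝ (fun q : V3 => q k) p =
          (ContinuousLinearMap.proj (R := ℝ) (φ := fun _ : Fin 3 => ℝ) k) :=
        (ContinuousLinearMap.proj (R := ℝ) (φ := fun _ : Fin 3 => ℝ) k).fderiv
      simp [grad, this]
      rcases eq_or_ne i k with rfl | hik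
      · simp
      · simp [Pi.single_eq_of_ne hik, Pi.single_eq_of_ne (Ne.symm hik)]
    rw [hgc 0, hgc 1, hgc 2] at h0
    have hdet : (Pi.single (0 : Fin 3) (1:ℝ)) ⬝ᵥ
        crossProduct (Pi.single (1 : Fin 3) (1:ℝ)) (Pi.single (2 : Fin 3) (1:ℝ)) = 1 := by
      simp [crossProduct, dotProduct, Fin.sum_univ_three]
    rw [hdet] at h0
    linarith
  · intro hcurl f g h hf hg hh p
    rw [jacobiator hP hf hg hh p, hcurl p]
    ring
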